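/- arXiv:2009.08485 — 3 statements merged into one kernel-verified Lean document; each statement's English description precedes it below -/
import Mathlib

section
/- Let d ≥ 2 and N ≥ 1 be integers such that d = N + 1 and d is prime. Then for every integer j with 1 ≤ j ≤ N, the integers u_j = ∑_{l=0}^{j−1} (1−d)^l and M̄ = ∑_{l=0}^{N} (1−d)^l are coprime. -/
/-!
Writing `G n = ∑_{l<n} x^l`, one has `G (n + m) = G n + x^n * G m`, so `G n` and `G m` generate
the same ideal as `G (n mod m)` and `G m`. Running the Euclidean algorithm on a coprime pair
`(m, n)` ends at `(G 0, G 1) = (0, 1)`, hence `G m` and `G n` are coprime in any commutative ring.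
The theorem is the case `x = 1 - d`, `m = j`, `n = d`, where `j < d` with `d` prime.
-/

open Finset

section GeomSum

variable {R : Type*} [CommRing R] (x : R)

theorem geom_sum_range_add (m n : ℕ) :
    ∑ l ∈ range (n + m), x ^ l = ∑ l ∈ range n, x ^ l + x ^ n * ∑ l ∈ range m, x ^ l := by
  simp only [sum_range_add, mul_sum, pow_add]

theorem isCoprime_geom_sum_add_mul_iff (m n k : ℕ) :
    IsCoprime (∑ l ∈ range m, x ^ l) (∑ l ∈ range (n + m * k), x ^ l) ↔
      IsCoprime (∑ l ∈ range m, x ^ l) (∑ l ∈ range n, x ^ l) := by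
  induction k with
  | zero => simp
  | succ k ih => rw [mul_add_one, ← add_assoc, geom_sum_range_add,
      IsCoprime.add_mul_right_right_iff, ih]

theorem isCoprime_geom_sum_of_coprime {m n : ℕ} (h : m.Coprime n) :
    IsCoprime (∑ l ∈ range m, x ^ l) (∑ l ∈ range n, x ^ l) := by
  induction m, n using Nat.gcd.induction with
  | H0 n =>
    obtain rfl : n = 1 := Nat.coprime_zero_left n |>.mp h
    simpa using isCoprime_one_right (x := (0 : R))
  | H1 m n _ ih =>
    rw [← Nat.mod_add_div n m, isCoprime_geom_sum_add_mul_iff]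
    exact (ih (by rwa [Nat.Coprime, ← Nat.gcd_rec])).symm

end GeomSum

theorem loop_weights_coprime_general (d N : ℕ) (hdN : d = N + 1)
    (hp : Nat.Prime d) :
    ∀ j : ℕ, 1 ≤ j → j ≤ N →
      IsCoprime (∑ l ∈ Finset.range j, (1 - (d : ℤ)) ^ l)
        (∑ l ∈ Finset.range (N + 1), (1 - (d : ℤ)) ^ l) := by
  intro j hj1 hjN
  subst hdN
  exact isCoprime_geom_sum_of_coprime _
    (Nat.coprime_of_lt_prime (by omega) (by omega) hp).symm

/-- For `d = N + 1` prime, each `u_j = ∑_{l<j} (1-d)^l` (for `1 ≤ j ≤ N`) is coprime to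
`M̄ = ∑_{l≤N} (1-d)^l`. -/
theorem loop_weights_coprime (d N : ℕ) (hd : 2 ≤ d) (hN : 1 ≤ N) (hdN : d = N + 1)
    (hp : Nat.Prime d) :
    ∀ j : ℕ, 1 ≤ j → j ≤ N →
      IsCoprime (∑ l ∈ Finset.range j, (1 - (d : ℤ)) ^ l)
        (∑ l ∈ Finset.range (N + 1), (1 - (d : ℤ)) ^ l) :=
  loop_weights_coprime_general d N hdN hp
end

section
/- Let d ≥ 2 and N ≥ 1 be integers and let ζ be a nonzero complex number with ζ^{M̄} = 1 (integer power, M̄ ∈ ℤ). Let P ∈ MvPolynomial (Fin (N+1)) ℂ be the loop polynomial P = ∑_{j ∈ Fin(N+1)} X_j^{d−1} · X_{j+1}, where j+1 is taken cyclically in Fin (N+1). Then the ℂ-algebra endomorphism of MvPolynomial (Fin (N+1)) ℂ determined by X_j ↦ ζ^{u_j} · X_j (with ζ^{u_j} the integer power of the unit ζ, and u_0 = 0) sends P to ζ · P. In particular the zero locus of P in ℙ^N is invariant under the action ζ·(x_0,…,x_N) = (x_0, ζ^{u_1}x_1, …, ζ^{u_N}x_N). -/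
/-- If `ζ ≠ 0` satisfies `ζ^M̄ = 1`, then the algebra endomorphism `X_j ↦ ζ^{u_j} · X_j`
sends the loop polynomial `P = ∑_j X_j^{d-1} X_{j+1}` to `ζ · P`. -/
theorem loop_polynomial_equivariance (d N : ℕ) (hd : 2 ≤ d) (hN : 1 ≤ N)
    (ζ : ℂ) (hζ : ζ ≠ 0)
    (hM : ζ ^ (∑ l ∈ Finset.range (N + 1), (1 - (d : ℤ)) ^ l) = 1) :
    (MvPolynomial.aeval
        (fun j : Fin (N + 1) =>
          ζ ^ (∑ l ∈ Finset.range (j : ℕ), (1 - (d : ℤ)) ^ l) • MvPolynomial.X j))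
      (∑ j : Fin (N + 1),
        (MvPolynomial.X j ^ (d - 1) * MvPolynomial.X (j + 1) :
          MvPolynomial (Fin (N + 1)) ℂ))
      = ζ • ∑ j : Fin (N + 1),
          (MvPolynomial.X j ^ (d - 1) * MvPolynomial.X (j + 1) :
            MvPolynomial (Fin (N + 1)) ℂ) := by
  rw [map_sum, Finset.smul_sum]
  refine Finset.sum_congr rfl fun j _ => ?_
  rw [map_mul, map_pow, MvPolynomial.aeval_X, MvPolynomial.aeval_X,
      smul_pow, smul_mul_smul_comm]
  congr 1
  rw [← zpow_natCast (ζ ^ (∑ l ∈ Finset.range (j : ℕ), (1 - (d : ℤ)) ^ l)),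
      ← zpow_mul, ← zpow_add₀ hζ]
  by_cases hj : j = Fin.last N
  · subst hj
    have h1 : ((Fin.last N + 1 : Fin (N + 1)) : ℕ) = 0 := by simp
    rw [h1]
    have hd1 : ((d - 1 : ℕ) : ℤ) = (d : ℤ) - 1 := by
      have : 1 ≤ d := le_trans (by norm_num) hd
      omega
    have key : (∑ l ∈ Finset.range (Fin.last N : ℕ), (1 - (d : ℤ)) ^ l) * ((d - 1 : ℕ) : ℤ)
        + ∑ l ∈ Finset.range 0, (1 - (d : ℤ)) ^ l
        = 1 - ∑ l ∈ Finset.range (N + 1), (1 - (d : ℤ)) ^ l := by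
      rw [hd1, Fin.val_last, geom_sum_succ]
      simp
      ring
    rw [key, zpow_sub₀ hζ, hM, zpow_one, div_one]
  · have h1 : ((j + 1 : Fin (N + 1)) : ℕ) = (j : ℕ) + 1 :=
      Fin.val_add_one_of_lt (Fin.lt_last_iff_ne_last.mpr hj)
    rw [h1]
    have hd1 : ((d - 1 : ℕ) : ℤ) = (d : ℤ) - 1 := by omega
    have key : (∑ l ∈ Finset.range (j : ℕ), (1 - (d : ℤ)) ^ l) * ((d - 1 : ℕ) : ℤ)
        + ∑ l ∈ Finset.range ((j : ℕ) + 1), (1 - (d : ℤ)) ^ l = 1 := by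
      rw [hd1, geom_sum_succ]
      ring
    rw [key, zpow_one]
end

section
/- Let d ≥ 2 and N ≥ 1 be integers with d = N + 1 and d prime, let ζ ∈ ℂ be a primitive M̄-th root of unity (M̄ := |∑_{l=0}^{N}(1−d)^l|), and let k be an integer not divisible by M̄. Suppose v : Fin (N+1) → ℂ is not identically zero and there exists λ ∈ ℂ such that ζ^{k·u_i} · v_i = λ · v_i for every i ∈ Fin (N+1) (integer powers of the unit ζ, with u_0 = 0). Then there exists an index i₀ such that v_j = 0 for all j ≠ i₀; that is, the fixed locus in ℙ^N of every nonzero element of the ℤ/M̄ℤ-action consists exactly of the N+1 coordinate points. -/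
/-! Write `S n = ∑_{l<n} x^l`, so `u_i = S i` and `M̄ = S (N+1)` for `x = 1 - d`. Since
`S (a + b) = S a + x^a S b` and `x` is invertible modulo `S a` for `a > 0`, the Euclidean
algorithm on indices shows that `S a` and `S b` are coprime whenever `a` and `b` are. Hence
`u_i - u_j = x^j S (i - j)` is coprime to `M̄` for `j < i ≤ N`, because `d = N + 1` is prime, so
`M̄ ∤ k (u_i - u_j)`, and the diagonal entries `ζ^{k u_i}` are pairwise distinct. An eigenvector
of a diagonal map with distinct entries is supported at a single coordinate. -/

open Finset

section GeomSum

variable {R : Type*} [CommRing R] (x : R)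

theorem geom_sum_add (a b : ℕ) :
    ∑ i ∈ range (a + b), x ^ i = ∑ i ∈ range a, x ^ i + x ^ a * ∑ i ∈ range b, x ^ i := by
  simp only [sum_range_add, pow_add, mul_sum]

theorem geom_sum_sub_geom_sum {i j : ℕ} (h : i ≤ j) :
    ∑ l ∈ range j, x ^ l - ∑ l ∈ range i, x ^ l = x ^ i * ∑ l ∈ range (j - i), x ^ l := by
  obtain ⟨c, rfl⟩ := Nat.exists_eq_add_of_le h
  rw [geom_sum_add, Nat.add_sub_cancel_left, add_sub_cancel_left]

theorem isCoprime_self_geom_sum {n : ℕ} (hn : 0 < n) : IsCoprime x (∑ i ∈ range n, x ^ i) := by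
  obtain ⟨m, rfl⟩ := Nat.exists_eq_add_of_lt hn
  exact ⟨-∑ i ∈ range m, x ^ i, 1, by rw [zero_add, geom_sum_succ]; ring⟩

theorem isCoprime_geom_sum_of_coprime_s7 {a b : ℕ} (h : a.Coprime b) :
    IsCoprime (∑ i ∈ range a, x ^ i) (∑ i ∈ range b, x ^ i) := by
  induction hs : a + b using Nat.strong_induction_on generalizing a b with
  | _ s ih =>
  wlog hab : a ≤ b generalizing a b
  · exact (this h.symm (by omega) (by omega)).symm
  rcases Nat.eq_zero_or_pos a with rfl | ha
  · rw [(Nat.coprime_zero_left b).1 h, geom_sum_zero, geom_sum_one]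
    exact isCoprime_one_right
  obtain ⟨c, rfl⟩ := Nat.exists_eq_add_of_le hab
  have hc : IsCoprime (∑ i ∈ range a, x ^ i) (∑ i ∈ range c, x ^ i) :=
    ih (a + c) (by omega) (Nat.coprime_self_add_right.1 h) rfl
  rw [geom_sum_add, add_comm]
  simpa only [mul_one] using
    (((isCoprime_self_geom_sum x ha).pow_left.symm.mul_right hc).add_mul_left_right 1)

theorem isCoprime_geom_sum_sub {n i j : ℕ} (hn : 0 < n) (hij : i ≤ j) (h : n.Coprime (j - i)) :
    IsCoprime (∑ l ∈ range n, x ^ l) (∑ l ∈ range j, x ^ l - ∑ l ∈ range i, x ^ l) := by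
  rw [geom_sum_sub_geom_sum x hij]
  exact (isCoprime_self_geom_sum x hn).pow_left.symm.mul_right (isCoprime_geom_sum_of_coprime_s7 x h)

theorem Nat.Prime.dvd_of_dvd_mul_geom_sum_sub {p : ℕ} (hp : p.Prime) {i j : ℕ} (hi : i < p)
    (hj : j < p) (hij : i ≠ j) {k : R}
    (h : ∑ l ∈ range p, x ^ l ∣ k * (∑ l ∈ range i, x ^ l - ∑ l ∈ range j, x ^ l)) :
    ∑ l ∈ range p, x ^ l ∣ k := by
  wlog hlt : i < j generalizing i j
  · exact this hj hi hij.symm (by rwa [← neg_sub, mul_neg, dvd_neg]) (by omega)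
  have hcop : p.Coprime (j - i) :=
    hp.coprime_iff_not_dvd.2 (Nat.not_dvd_of_pos_of_lt (by omega) (by omega))
  rw [← neg_sub, mul_neg, dvd_neg] at h
  exact (isCoprime_geom_sum_sub x hp.pos hlt.le hcop).dvd_of_dvd_mul_right h

end GeomSum

theorem IsPrimitiveRoot.dvd_sub_of_zpow_eq_zpow {K : Type*} [CommGroupWithZero K] {ζ : K} {n : ℕ}
    (hζ : IsPrimitiveRoot ζ n) (hζ0 : ζ ≠ 0) {a b : ℤ} (hab : ζ ^ a = ζ ^ b) : (n : ℤ) ∣ a - b :=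
  (hζ.zpow_eq_one_iff_dvd _).1 <| by rw [zpow_sub₀ hζ0, hab, div_self (zpow_ne_zero b hζ0)]

theorem injective_zpow_mul_geom_sum {K : Type*} [Field K] {p : ℕ} (hp : p.Prime) (x : ℤ) {ζ : K}
    (hζ : IsPrimitiveRoot ζ (∑ l ∈ range p, x ^ l).natAbs) {k : ℤ}
    (hk : ¬ ((∑ l ∈ range p, x ^ l).natAbs : ℤ) ∣ k) :
    Function.Injective fun i : Fin p => ζ ^ (k * ∑ l ∈ range i, x ^ l) := by
  intro i j hij
  by_contra hne
  have hsep : ¬ ∑ l ∈ range p, x ^ l ∣ k * (∑ l ∈ range i, x ^ l - ∑ l ∈ range j, x ^ l) :=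
    fun h ↦ hk <| Int.natAbs_dvd.2 <|
      hp.dvd_of_dvd_mul_geom_sum_sub x i.isLt j.isLt (Fin.val_ne_of_ne hne) h
  rcases eq_or_ne ζ 0 with rfl | hζ0
  · -- `0` is a primitive `0`-th root of unity; the sum vanishes only for `x = -1`, `p = 2`.
    have hA : ∑ l ∈ range p, x ^ l = 0 := by
      by_contra hA
      exact hζ.ne_zero (Int.natAbs_ne_zero.2 hA) rfl
    obtain rfl : p = 2 := hp.even_iff.1 ((geom_sum_eq_zero_iff_neg_one hp.ne_zero).1 hA).2
    rw [hA, zero_dvd_iff] at hsep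
    fin_cases i <;> fin_cases j <;> simp_all [zero_zpow_eq]
  · exact hsep (Int.natAbs_dvd.1 (by rw [mul_sub]; exact hζ.dvd_sub_of_zpow_eq_zpow hζ0 hij))

theorem exists_forall_ne_eq_zero_of_injective {ι M₀ : Type*} [MulZeroClass M₀]
    [IsRightCancelMulZero M₀] {c v : ι → M₀} {μ : M₀} (hc : Function.Injective c) (hv : v ≠ 0)
    (h : ∀ i, c i * v i = μ * v i) : ∃ i₀, ∀ j ≠ i₀, v j = 0 := by
  obtain ⟨i₀, hi₀⟩ := Function.ne_iff.1 hv
  refine ⟨i₀, fun j hj ↦ by_contra fun hvj ↦ hj (hc ?_)⟩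
  exact (mul_right_cancel₀ hvj (h j)).trans (mul_right_cancel₀ hi₀ (h i₀)).symm

theorem fixed_locus_is_coordinate_points_general (d N : ℕ)
    (hdN : d = N + 1) (hp : Nat.Prime d) (ζ : ℂ)
    (hζ : IsPrimitiveRoot ζ (∑ l ∈ Finset.range (N + 1), (1 - (d : ℤ)) ^ l).natAbs)
    (k : ℤ)
    (hk : ¬ (((∑ l ∈ Finset.range (N + 1), (1 - (d : ℤ)) ^ l).natAbs : ℤ) ∣ k))
    (v : Fin (N + 1) → ℂ) (hv : v ≠ 0) (lam : ℂ)
    (hfix : ∀ i : Fin (N + 1),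
      ζ ^ (k * ∑ l ∈ Finset.range (i : ℕ), (1 - (d : ℤ)) ^ l) * v i = lam * v i) :
    ∃ i₀ : Fin (N + 1), ∀ j : Fin (N + 1), j ≠ i₀ → v j = 0 := by
  subst hdN
  exact exists_forall_ne_eq_zero_of_injective (injective_zpow_mul_geom_sum hp _ hζ hk) hv hfix

/-- For `d = N + 1` prime, `ζ` a primitive `M̄`-th root of unity and `k` not divisible by `M̄`,
any nonzero eigenvector of the diagonal map with entries `ζ^{k·u_i}` is supported at a single
coordinate: the fixed locus of every nonzero group element in `ℙ^N` consists of the coordinate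
points. -/
theorem fixed_locus_is_coordinate_points (d N : ℕ) (hd : 2 ≤ d) (hN : 1 ≤ N)
    (hdN : d = N + 1) (hp : Nat.Prime d) (ζ : ℂ)
    (hζ : IsPrimitiveRoot ζ (∑ l ∈ Finset.range (N + 1), (1 - (d : ℤ)) ^ l).natAbs)
    (k : ℤ)
    (hk : ¬ (((∑ l ∈ Finset.range (N + 1), (1 - (d : ℤ)) ^ l).natAbs : ℤ) ∣ k))
    (v : Fin (N + 1) → ℂ) (hv : v ≠ 0) (lam : ℂ)
    (hfix : ∀ i : Fin (N + 1),
      ζ ^ (k * ∑ l ∈ Finset.range (i : ℕ), (1 - (d : ℤ)) ^ l) * v i = lam * v i) :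
    ∃ i₀ : Fin (N + 1), ∀ j : Fin (N + 1), j ≠ i₀ → v j = 0 :=
  fixed_locus_is_coordinate_points_general d N hdN hp ζ hζ k hk v hv lam hfix
end
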